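/- Let k be a perfect field of characteristic p and (A, φ) a k-algebra with Frobenius splitting φ. Then the twisted Witt ring W_2^φ(A) is a flat W_2(k)-algebra, and the first projection induces an isomorphism W_2^φ(A)/p·W_2^φ(A) ≅ A; i.e., W_2^φ(A) is a flat lifting of A to W_2(k). -/

import Mathlib

/-- A type-level copy of `A × A`, the underlying set of twisted Witt vectors. -/
structure WittPair (A : Type*) where
  fst : A
  snd : A

/-- The value in `A` of the integral polynomial `P(a,b) = ((a+b)^p − a^p − b^p)/p`,
written via binomial coefficients: `P(a,b) = Σ_{0<i<p} (C(p,i)/p) a^i b^{p-i}`. -/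
def wittP (p : ℕ) {A : Type*} [CommRing A] (a b : A) : A :=
  ∑ i ∈ Finset.Ioo 0 p, ((p.choose i / p : ℕ) : A) * a ^ i * b ^ (p - i)

/-- `inst` is the twisted Witt ring structure `W₂^φ(A)` on `A × A`. -/
def IsTwistedWittRing {A : Type*} [CommRing A] (p : ℕ) (φ : A → A)
    (inst : CommRing (WittPair A)) : Prop :=
  letI := inst
  (∀ x y : WittPair A,
      x + y = ⟨x.fst + y.fst, x.snd + y.snd - φ (wittP p x.fst y.fst)⟩) ∧
  (∀ x y : WittPair A,
      x * y = ⟨x.fst * y.fst, x.fst * y.snd + y.fst * x.snd⟩) ∧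
  (1 : WittPair A) = ⟨1, 0⟩

/-!
Reading the Witt coordinates of `W₂(k)` through `(x₀, x₁) ↦ (x₀, x₁^{1/p})` turns its operations
into those of `W₂^{γ_k}(k)`. Since `φ (c^p) = c`, the splitting agrees with `γ_k` on the image of
`k`, so the same formula gives a ring map `W₂(k) → W₂^φ(A)`, and it sends `p` to `(0, 1)`. As
`(a₀, a₁)·(0, 1) = (0, a₀)`, the ideal `p W₂^φ(A)` is both the kernel of the first projection and
the `p`-torsion of `W₂^φ(A)`. The ideals of `W₂(k)` are `0`, `(p)` and `W₂(k)` (images of the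
ideals of the DVR `W(k)`) and `p² = 0`, so by the ideal criterion flatness comes down to this
equality of the `p`-torsion with `p W₂^φ(A)`.
-/

section Flat

open TensorProduct

theorem Ideal.exists_tmul_eq_of_span_singleton {R M : Type*} [CommSemiring R] [AddCommMonoid M]
    [Module R M] (x : R) (z : Ideal.span {x} ⊗[R] M) :
    ∃ m : M, ⟨x, Ideal.mem_span_singleton_self x⟩ ⊗ₜ[R] m = z := by
  induction z using TensorProduct.induction_on with
  | zero => exact ⟨0, tmul_zero _ _⟩
  | tmul i m =>
    obtain ⟨c, hc⟩ := Ideal.mem_span_singleton'.mp i.2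
    refine ⟨c • m, ?_⟩
    rw [tmul_smul, smul_tmul']
    congr 1
    exact Subtype.ext hc
  | add z₁ z₂ ih₁ ih₂ =>
    obtain ⟨m₁, rfl⟩ := ih₁
    obtain ⟨m₂, rfl⟩ := ih₂
    exact ⟨m₁ + m₂, tmul_add _ _ _⟩

variable {R M : Type*} [CommRing R] [AddCommGroup M] [Module R M]

theorem Ideal.rTensor_subtype_span_singleton_injective {x : R}
    (h : ∀ m : M, x • m = 0 → m ∈ (R ∙ x).annihilator • (⊤ : Submodule R M)) :
    Function.Injective ((Ideal.span {x}).subtype.rTensor M) := by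
  rw [injective_iff_map_eq_zero]
  intro z hz
  obtain ⟨m, rfl⟩ := Ideal.exists_tmul_eq_of_span_singleton x z
  replace hz : x • m = 0 := by
    simpa using congrArg (TensorProduct.lid R M) hz
  refine Submodule.smul_induction_on (h m hz) (fun a ha n _ => ?_)
    (fun m₁ m₂ h₁ h₂ => by rw [tmul_add, h₁, h₂, add_zero])
  rw [tmul_smul, smul_tmul', ← zero_tmul (Ideal.span {x}) n]
  congr 1
  exact Subtype.ext ((Submodule.mem_annihilator_span_singleton x a).mp ha)

theorem Module.Flat.of_forall_ideal_eq_span_pow {ε : R} (hε : ε ^ 2 = 0)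
    (hR : ∀ I : Ideal R, ∃ n, I = Ideal.span {ε ^ n})
    (hM : ∀ m : M, ε • m = 0 → ∃ m', m = ε • m') : Module.Flat R M := by
  rw [Module.Flat.iff_rTensor_injective']
  intro I
  obtain ⟨n, rfl⟩ := hR I
  refine Ideal.rTensor_subtype_span_singleton_injective fun m hm => ?_
  match n, hm with
  | 0, hm =>
    rw [pow_zero, one_smul] at hm
    rw [hm]
    exact Submodule.zero_mem _
  | 1, hm =>
    rw [pow_one] at hm ⊢
    obtain ⟨m', rfl⟩ := hM m hm
    refine Submodule.smul_mem_smul ?_ Submodule.mem_top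
    rw [Submodule.mem_annihilator_span_singleton, smul_eq_mul, ← sq, hε]
  | n + 2, _ =>
    rw [pow_add, hε, mul_zero, Submodule.span_singleton_eq_bot.mpr rfl,
      Submodule.annihilator_bot, Submodule.top_smul]
    exact Submodule.mem_top

end Flat

theorem natCast_mul_wittP {p : ℕ} [hp : Fact p.Prime] {B : Type*} [CommRing B] (a b : B) :
    (p : B) * wittP p a b = (a + b) ^ p - a ^ p - b ^ p := by
  have hp0 : 0 < p := hp.out.pos
  rw [add_pow, Finset.range_eq_Ico, Finset.sum_eq_sum_Ico_succ_bot (by omega),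
    Finset.sum_Ico_succ_top (by omega), wittP, Finset.mul_sum, ← Finset.Ico_add_one_left_eq_Ioo]
  simp only [pow_zero, Nat.sub_zero, Nat.choose_zero_right, Nat.sub_self, Nat.choose_self,
    Nat.cast_one, mul_one, one_mul, zero_add]
  rw [show ∀ S : B, b ^ p + (S + a ^ p) - a ^ p - b ^ p = S from fun S => by ring]
  refine Finset.sum_congr rfl fun i hi => ?_
  rw [Finset.mem_Ico] at hi
  have hdvd : p ∣ p.choose i := hp.out.dvd_choose_self (by omega) hi.2
  rw [← mul_assoc, ← mul_assoc, ← Nat.cast_mul, Nat.mul_div_cancel' hdvd]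
  ring

theorem map_wittP {p : ℕ} {B C F : Type*} [CommRing B] [CommRing C] [FunLike F B C]
    [RingHomClass F B C] (f : F) (a b : B) : f (wittP p a b) = wittP p (f a) (f b) := by
  simp only [wittP, map_sum, map_mul, map_pow, map_natCast]

namespace WittVector

open MvPolynomial

variable {p : ℕ} [hp : Fact p.Prime]

theorem wittAdd_one : wittAdd p 1 = X (0, 1) + X (1, 1) - wittP p (X (0, 0)) (X (1, 0)) := by
  have key := wittStructureInt_prop p (X (0 : Fin 2) + X 1) 1
  simp only [wittPolynomial_one, map_add, map_mul, map_pow, bind₁_X_right, rename_X,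
    map_natCast] at key
  change p * wittAdd p 1 + wittAdd p 0 ^ p = _ at key
  rw [wittAdd_zero] at key
  refine mul_left_cancel₀ (Nat.cast_ne_zero.mpr hp.out.ne_zero) ?_
  rw [mul_sub, natCast_mul_wittP]
  linear_combination key

theorem wittMul_one : wittMul p 1 = X (0, 0) ^ p * X (1, 1) + X (1, 0) ^ p * X (0, 1) +
    (p : MvPolynomial _ ℤ) * X (0, 1) * X (1, 1) := by
  have key := wittStructureInt_prop p (X (0 : Fin 2) * X 1) 1
  simp only [wittPolynomial_one, map_add, map_mul, map_pow, bind₁_X_right, rename_X,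
    map_natCast] at key
  change p * wittMul p 1 + wittMul p 0 ^ p = _ at key
  rw [wittMul_zero] at key
  refine mul_left_cancel₀ (Nat.cast_ne_zero.mpr hp.out.ne_zero) ?_
  linear_combination key

variable {R : Type*} [CommRing R]

theorem add_coeff_one (x y : WittVector p R) :
    (x + y).coeff 1 = x.coeff 1 + y.coeff 1 - wittP p (x.coeff 0) (y.coeff 0) := by
  rw [add_coeff, wittAdd_one, peval]
  simp [map_wittP]

theorem mul_coeff_one (x y : WittVector p R) :
    (x * y).coeff 1 =
      x.coeff 0 ^ p * y.coeff 1 + y.coeff 0 ^ p * x.coeff 1 + p * x.coeff 1 * y.coeff 1 := by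
  rw [mul_coeff, wittMul_one, peval]
  simp

end WittVector

namespace TruncatedWittVector

variable {p : ℕ} [Fact p.Prime]

theorem natCast_p_pow_eq_zero (n : ℕ) (R : Type*) [CommRing R] [CharP R p] :
    (p : TruncatedWittVector p n R) ^ n = 0 := by
  rw [← map_natCast (WittVector.truncate (p := p) (R := R) n), ← map_pow,
    ← RingHom.mem_ker, WittVector.mem_ker_truncate]
  exact fun i hi => WittVector.coeff_p_pow_eq_zero p R hi.ne

theorem exists_ideal_eq_span_p_pow {n : ℕ} {k : Type*} [Field k] [CharP k p] [PerfectRing k p]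
    (I : Ideal (TruncatedWittVector p n k)) :
    ∃ m, I = Ideal.span {(p : TruncatedWittVector p n k) ^ m} := by
  have hsurj := WittVector.truncate_surjective (p := p) n k
  rw [← Ideal.map_comap_of_surjective _ hsurj I]
  by_cases hbot : I.comap (WittVector.truncate n) = ⊥
  · refine ⟨n, ?_⟩
    rw [hbot, Ideal.map_bot, natCast_p_pow_eq_zero, Ideal.span_singleton_eq_bot.mpr rfl]
  · obtain ⟨m, hm⟩ := IsDiscreteValuationRing.ideal_eq_span_pow_irreducible hbot
      (WittVector.irreducible p)
    refine ⟨m, ?_⟩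
    rw [hm, Ideal.map_span, Set.image_singleton, map_pow, map_natCast]

end TruncatedWittVector

theorem apply_map_eq_map_frobeniusEquiv_symm {p : ℕ} {k A : Type*} [CommRing k] [ExpChar k p]
    [PerfectRing k p] [CommRing A] {φ : A → A} (ι : k →+* A) (hsplit : ∀ a, φ (a ^ p) = a)
    (c : k) : φ (ι c) = ι ((frobeniusEquiv k p).symm c) := by
  conv_lhs => rw [← frobeniusEquiv_symm_pow_p k p c, map_pow, hsplit]

namespace IsTwistedWittRing

variable {A : Type*} [CommRing A] {p : ℕ} {φ : A → A} [inst : CommRing (WittPair A)]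

theorem zero_eq (h : IsTwistedWittRing p φ inst) : (0 : WittPair A) = ⟨0, 0⟩ := by
  rw [← zero_mul (⟨0, 0⟩ : WittPair A), h.2.1]
  simp

def fstHom (h : IsTwistedWittRing p φ inst) : WittPair A →+* A where
  toFun := WittPair.fst
  map_one' := by rw [h.2.2]
  map_mul' x y := by rw [h.2.1]
  map_zero' := by rw [h.zero_eq]
  map_add' x y := by rw [h.1]

theorem mul_mk_zero_one (h : IsTwistedWittRing p φ inst) (x : WittPair A) :
    x * ⟨0, 1⟩ = ⟨0, x.fst⟩ := by
  rw [h.2.1]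
  simp

theorem mul_mk_zero_one_eq_zero_iff (h : IsTwistedWittRing p φ inst) (x : WittPair A) :
    x * ⟨0, 1⟩ = 0 ↔ x.fst = 0 := by
  rw [h.mul_mk_zero_one, h.zero_eq]
  simp

theorem eq_mul_mk_zero_one (h : IsTwistedWittRing p φ inst) {x : WittPair A} (hx : x.fst = 0) :
    x = ⟨x.snd, 0⟩ * ⟨0, 1⟩ := by
  rw [h.mul_mk_zero_one]
  cases x
  simp_all

theorem ker_fstHom (h : IsTwistedWittRing p φ inst) :
    RingHom.ker h.fstHom = Ideal.span {⟨0, 1⟩} := by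
  ext x
  rw [RingHom.mem_ker, Ideal.mem_span_singleton']
  constructor
  · exact fun hx => ⟨_, (h.eq_mul_mk_zero_one hx).symm⟩
  · rintro ⟨a, rfl⟩
    exact congrArg WittPair.fst (h.mul_mk_zero_one a)

variable [Fact p.Prime] {k : Type*} [CommRing k] [CharP k p] [PerfectRing k p]

noncomputable def wittVectorHom (h : IsTwistedWittRing p φ inst) (ι : k →+* A)
    (hsplit : ∀ a, φ (a ^ p) = a) : WittVector p k →+* WittPair A where
  toFun x := ⟨ι (x.coeff 0), ι ((frobeniusEquiv k p).symm (x.coeff 1))⟩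
  map_one' := by
    rw [WittVector.one_coeff_zero, WittVector.one_coeff_eq_of_pos _ _ _ one_pos, map_zero,
      map_zero, map_one, h.2.2]
  map_mul' x y := by
    rw [h.2.1, WittVector.mul_coeff_zero, WittVector.mul_coeff_one, CharP.cast_eq_zero]
    simp only [zero_mul, add_zero, map_add, map_mul, frobeniusEquiv_symm_pow]
  map_zero' := by
    simp only [WittVector.zero_coeff, map_zero, h.zero_eq]
  map_add' x y := by
    rw [h.1, WittVector.add_coeff_zero, WittVector.add_coeff_one]
    dsimp only
    rw [← map_wittP, apply_map_eq_map_frobeniusEquiv_symm ι hsplit]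
    simp only [map_add, map_sub]

theorem natCast_p_eq_mk_zero_one (h : IsTwistedWittRing p φ inst) (ι : k →+* A)
    (hsplit : ∀ a, φ (a ^ p) = a) : (p : WittPair A) = ⟨0, 1⟩ := by
  rw [← map_natCast (h.wittVectorHom ι hsplit)]
  change (⟨_, _⟩ : WittPair A) = _
  rw [WittVector.coeff_p_zero, WittVector.coeff_p_one, map_zero, map_one, map_one]

theorem ker_truncate_le_ker_wittVectorHom (h : IsTwistedWittRing p φ inst) (ι : k →+* A)
    (hsplit : ∀ a, φ (a ^ p) = a) :
    RingHom.ker (WittVector.truncate 2) ≤ RingHom.ker (h.wittVectorHom ι hsplit) := by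
  intro x hx
  rw [WittVector.mem_ker_truncate] at hx
  rw [RingHom.mem_ker, h.zero_eq]
  change (⟨_, _⟩ : WittPair A) = _
  rw [hx 0 (by norm_num), hx 1 (by norm_num), map_zero, map_zero, map_zero]

end IsTwistedWittRing

theorem twistedWittRing_flat_lifting_general
    (p : ℕ) [Fact p.Prime] (k : Type) [Field k] [CharP k p]
    [ExpChar k p] [PerfectRing k p]
    (A : Type) [CommRing A] [Algebra k A]
    (φ : A → A)
    (hsplit : ∀ a : A, φ (a ^ p) = a)
    (inst : CommRing (WittPair A)) (hinst : IsTwistedWittRing p φ inst) :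
    letI := inst
    ∃ alg : Algebra (TruncatedWittVector p 2 k) (WittPair A),
      letI := alg
      Module.Flat (TruncatedWittVector p 2 k) (WittPair A) ∧
      ∃ π : WittPair A →+* A,
        (∀ x : WittPair A, π x = x.fst) ∧
        RingHom.ker π = Ideal.span {(p : WittPair A)} := by
  let _ := inst
  have hp : (p : WittPair A) = ⟨0, 1⟩ := hinst.natCast_p_eq_mk_zero_one (algebraMap k A) hsplit
  let f : TruncatedWittVector p 2 k →+* WittPair A :=
    (WittVector.truncate 2).liftOfSurjective (WittVector.truncate_surjective p 2 k)
      ⟨hinst.wittVectorHom (algebraMap k A) hsplit, hinst.ker_truncate_le_ker_wittVectorHom _ _⟩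
  let _ := f.toAlgebra
  have hsmul (m : WittPair A) : (p : TruncatedWittVector p 2 k) • m = m * ⟨0, 1⟩ := by
    rw [Algebra.smul_def, map_natCast, hp, mul_comm]
  have hflat : Module.Flat (TruncatedWittVector p 2 k) (WittPair A) := by
    refine Module.Flat.of_forall_ideal_eq_span_pow (TruncatedWittVector.natCast_p_pow_eq_zero 2 k)
      TruncatedWittVector.exists_ideal_eq_span_p_pow fun m hm => ⟨⟨m.snd, 0⟩, ?_⟩
    rw [hsmul, hinst.mul_mk_zero_one_eq_zero_iff] at hm
    rw [hsmul]
    exact hinst.eq_mul_mk_zero_one hm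
  exact ⟨f.toAlgebra, hflat, hinst.fstHom, fun _ => rfl, by rw [hinst.ker_fstHom, hp]⟩

/-- For a perfect field `k` of characteristic `p` and a `k`-algebra `A` with a
Frobenius splitting `φ`, the twisted Witt ring `W₂^φ(A)` is a flat
`W₂(k)`-algebra and the first projection induces `W₂^φ(A)/p ≅ A`; i.e.
`W₂^φ(A)` is a flat lifting of `A` to `W₂(k)`. -/
theorem twistedWittRing_flat_lifting
    (p : ℕ) [Fact p.Prime] (k : Type) [Field k] [CharP k p]
    [ExpChar k p] [PerfectRing k p]
    (A : Type) [CommRing A] [Algebra k A]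
    (φ : A → A) (haddφ : ∀ a b : A, φ (a + b) = φ a + φ b)
    (hsemilinear : ∀ a b : A, φ (a ^ p * b) = a * φ b)
    (hsplit : ∀ a : A, φ (a ^ p) = a)
    (inst : CommRing (WittPair A)) (hinst : IsTwistedWittRing p φ inst) :
    letI := inst
    ∃ alg : Algebra (TruncatedWittVector p 2 k) (WittPair A),
      letI := alg
      Module.Flat (TruncatedWittVector p 2 k) (WittPair A) ∧
      ∃ π : WittPair A →+* A,
        (∀ x : WittPair A, π x = x.fst) ∧
        RingHom.ker π = Ideal.span {(p : WittPair A)} :=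
  twistedWittRing_flat_lifting_general p k A φ hsplit inst hinst
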